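/- arXiv:0806.3201 — 3 statements merged into one kernel-verified Lean document; each statement's English description precedes it below -/
import Mathlib

section
/- An edge e = (v,w) of G belongs to the aggregate backbone H* (i.e., e is essential) if and only if there exist nodes x and y and a minimum-delay directed path from x to y that contains the edge e. -/
/-!
A subpath of a minimum-delay path is itself a minimum-delay path between its endpoints:
splicing a cheaper path with the same endpoints in its place would make the whole path
cheaper. Applied to the one-edge subpath `[v, w]`, this makes every edge of a minimum-delay
path essential; conversely an essential edge is a minimum-delay path by itself.
-/

/-- A directed path (with at least one edge) from `x` to `y` in the directed graph with
edge relation `E`, represented as the list of its vertices. -/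
def IsDipath {V : Type*} (E : V → V → Prop) (x y : V) (p : List V) : Prop :=
  2 ≤ p.length ∧ p.head? = some x ∧ p.getLast? = some y ∧ p.Chain' E

/-- The delay of a directed path: the sum of the delays `δ` of its edges. -/
noncomputable def pathDelay {V : Type*} (δ : V → V → ℝ) (p : List V) : ℝ :=
  ((p.zip p.tail).map fun q => δ q.1 q.2).sum

/-- `p` is a minimum-delay directed path from `x` to `y`: its delay is at most the delay
of every directed path from `x` to `y`. -/
def IsMinDelayPath {V : Type*} (E : V → V → Prop) (δ : V → V → ℝ) (x y : V)
    (p : List V) : Prop :=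
  IsDipath E x y p ∧ ∀ q, IsDipath E x y q → pathDelay δ p ≤ pathDelay δ q

/-- An edge `(v,w)` is essential (i.e. belongs to the aggregate backbone `H*`) if the
single-edge path `[v, w]` is a minimum-delay path from `v` to `w`. -/
def EssentialEdge {V : Type*} (E : V → V → Prop) (δ : V → V → ℝ) (v w : V) : Prop :=
  E v w ∧ IsMinDelayPath E δ v w [v, w]

section
variable {V : Type*}

theorem pathDelay_cons_cons (δ : V → V → ℝ) (a b : V) (l : List V) :
    pathDelay δ (a :: b :: l) = δ a b + pathDelay δ (b :: l) := by
  simp [pathDelay]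

theorem pathDelay_append_cons (δ : V → V → ℝ) (s l : List V) (x : V) :
    pathDelay δ (s ++ x :: l) = pathDelay δ (s ++ [x]) + pathDelay δ (x :: l) := by
  induction s with
  | nil => simp [pathDelay]
  | cons a s ih =>
    cases s with
    | nil => simp [pathDelay]
    | cons b s =>
      simp only [List.cons_append] at ih ⊢
      rw [pathDelay_cons_cons, pathDelay_cons_cons, ih, add_assoc]

theorem pathDelay_append_append (δ : V → V → ℝ) {s q t : List V} {a b : V}
    (ha : q.head? = some a) (hb : q.getLast? = some b) :
    pathDelay δ (s ++ q ++ t) =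
      pathDelay δ (s ++ [a]) + pathDelay δ q + pathDelay δ (b :: t) := by
  obtain ⟨m, rfl⟩ : ∃ m, q = a :: m := List.head?_eq_some_iff.mp ha
  obtain ⟨init, hinit⟩ := List.getLast?_eq_some_iff.mp hb
  have hsplit : s ++ (a :: m) ++ t = (s ++ init) ++ b :: t := by simp [hinit]
  rw [hsplit, pathDelay_append_cons, List.append_assoc, ← hinit, pathDelay_append_cons]

theorem IsDipath.append_append_of_isDipath {E : V → V → Prop} {x y v w : V} {s q r t : List V}
    (hp : IsDipath E x y (s ++ r ++ t)) (hr : IsDipath E v w r) (hq : IsDipath E v w q) :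
    IsDipath E x y (s ++ q ++ t) := by
  obtain ⟨hplen, hphead, hplast, hpchain⟩ := hp
  obtain ⟨-, hrhead, hrlast, -⟩ := hr
  obtain ⟨hqlen, hqhead, hqlast, hqchain⟩ := hq
  have hhead : q.head? = r.head? := hqhead.trans hrhead.symm
  have hlast : q.getLast? = r.getLast? := hqlast.trans hrlast.symm
  refine ⟨by simp only [List.length_append] at hplen ⊢; omega, ?_, ?_, ?_⟩
  · simpa [List.head?_append, hhead] using hphead
  · simpa [List.getLast?_append, hlast] using hplast
  · have hchain : (s ++ (r ++ t)).IsChain E := by rw [← List.append_assoc]; exact hpchain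
    rw [List.isChain_append, List.isChain_append, List.head?_append, ← hhead, ← hlast,
      ← List.head?_append] at hchain
    obtain ⟨hs, ⟨-, ht, hqt⟩, hsq⟩ := hchain
    rw [List.append_assoc]
    exact hs.append (hqchain.append ht hqt) hsq

theorem IsMinDelayPath.of_infix {E : V → V → Prop} {δ : V → V → ℝ} {x y v w : V}
    {p r : List V} (hp : IsMinDelayPath E δ x y p) (hrp : r <:+: p) (hr : IsDipath E v w r) :
    IsMinDelayPath E δ v w r := by
  obtain ⟨s, t, rfl⟩ := hrp
  refine ⟨hr, fun q hq => ?_⟩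
  have hdetour := hp.2 _ (hp.1.append_append_of_isDipath hr hq)
  rw [pathDelay_append_append δ hr.2.1 hr.2.2.1,
    pathDelay_append_append δ hq.2.1 hq.2.2.1] at hdetour
  linarith

end

theorem essential_iff_on_min_delay_path_general {V : Type*}
    (E : V → V → Prop) (δ : V → V → ℝ) (v w : V) :
    EssentialEdge E δ v w ↔
      ∃ x y : V, ∃ p : List V, IsMinDelayPath E δ x y p ∧ [v, w] <:+: p := by
  refine ⟨fun hvw => ⟨v, w, [v, w], hvw.2, List.infix_refl _⟩, ?_⟩
  rintro ⟨x, y, p, hp, hvwp⟩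
  have hvw : E v w := List.isChain_pair.mp (hp.1.2.2.2.infix hvwp)
  exact ⟨hvw, hp.of_infix hvwp ⟨le_rfl, rfl, rfl, List.isChain_pair.mpr hvw⟩⟩

/-- An edge `e = (v,w)` of `G` is essential (belongs to the aggregate backbone `H*`)
if and only if there are nodes `x`, `y` and a minimum-delay directed path from `x` to `y`
containing the edge `e` (i.e. having `v, w` as consecutive vertices). -/
theorem essential_iff_on_min_delay_path {V : Type*} [Fintype V]
    (E : V → V → Prop) (δ : V → V → ℝ)
    (hδ : ∀ a b, E a b → 0 < δ a b) (v w : V) (hvw : E v w) :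
    EssentialEdge E δ v w ↔
      ∃ x y : V, ∃ p : List V, IsMinDelayPath E δ x y p ∧ [v, w] <:+: p :=
  essential_iff_on_min_delay_path_general E δ v w
end

section
/- Let the events of E be processed in increasing order of time by the following algorithm: maintain for each node v a vector Cl_v : V → ℝ ∪ {⊥}, initialized with Cl_v(u) = ⊥ for all u ≠ v; on processing an event (v,w,s), update Cl_w(u) := max(Cl_w(u), Cl_v(u)) for every u ∉ {v,w}, and set Cl_w(v) := max(Cl_w(v), s). Then for every time t, after processing exactly the events of E with time ≤ t, for all nodes u ≠ v one has Cl_v(u) = φ_{v,t}(u), i.e., the stored clock value equals the maximum first-event time over all time-respecting paths from u to v ending by time t (and equals ⊥ if no such path exists). -/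
/-- `L` is a time-respecting path from `u` to `v` ending by time `t`: a nonempty sequence of
communication events `(x₀,x₁,t₁), (x₁,x₂,t₂), …, (x_{k−1},x_k,t_k)` from the event set `Evs`
(each event being a triple (sender, receiver, time)) with `x₀ = u`, `x_k = v` and
`t₁ < t₂ < ⋯ < t_k ≤ t`. -/
def IsTRPath {V : Type*} (Evs : Finset (V × V × ℝ)) (u v : V) (t : ℝ)
    (L : List (V × V × ℝ)) : Prop :=
  L ≠ [] ∧ (∀ e ∈ L, e ∈ Evs) ∧
  (∃ e, L.head? = some e ∧ e.1 = u) ∧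
  (∃ e, L.getLast? = some e ∧ e.2.1 = v ∧ e.2.2 ≤ t) ∧
  L.Chain' (fun e f => e.2.1 = f.1 ∧ e.2.2 < f.2.2)

/-- The view `φ_{v,t}(u)` of `u` held by `v` at time `t`: equal to `t` if `u = v`, and
otherwise the maximum of the first-event times over all time-respecting paths from `u`
to `v` ending by time `t`, taken to be `⊥` if no such path exists (here values live in
`EReal`, whose bottom element `⊥` is smaller than every real number). -/
noncomputable def view {V : Type*} [DecidableEq V] (Evs : Finset (V × V × ℝ))
    (v : V) (t : ℝ) (u : V) : EReal :=
  if u = v then (t : EReal)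
  else sSup {x : EReal | ∃ L e, IsTRPath Evs u v t L ∧ L.head? = some e ∧ x = (e.2.2 : EReal)}

/-- One step of the vector-clock algorithm: processing the event `ev = (v, w, s)` updates the
clock of the receiver `w` by `Cl_w(u) := max (Cl_w(u), Cl_v(u))` for every `u ∉ {v, w}`, and
`Cl_w(v) := max (Cl_w(v), s)`; all other entries are unchanged. -/
noncomputable def clockStep {V : Type*} [DecidableEq V] (st : V → V → EReal) (ev : V × V × ℝ) :
    V → V → EReal :=
  fun a u =>
    if a = ev.2.1 then
      if u = ev.1 then max (st a u) ((ev.2.2 : ℝ) : EReal)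
      else if u = a then st a u
      else max (st a u) (st ev.1 u)
    else st a u

/-!
By induction over the processed events, `Cl_v(u)` is the supremum of the first-event times of
the time-respecting paths from `u` to `v` that use only processed events. As events are processed
in increasing order of time, the newest event `e = (v, w, s)` can only be the last step of such a
path, so the new paths are `e` itself and the paths to `v` extended by `e`, all ending at `w`:
this is the update rule. A path from `v` back to `v` followed by `e` starts before `s`, so it
does not affect `Cl_w(v) = max (Cl_w(v), s)`.
-/

namespace VectorClock

variable {V : Type*}

def Linked (e f : V × V × ℝ) : Prop := e.2.1 = f.1 ∧ e.2.2 < f.2.2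

def IsPathIn (S : Set (V × V × ℝ)) (u v : V) (P : List (V × V × ℝ)) : Prop :=
  P ≠ [] ∧ (∀ e ∈ P, e ∈ S) ∧ (∃ e, P.head? = some e ∧ e.1 = u) ∧
    (∃ e, P.getLast? = some e ∧ e.2.1 = v) ∧ P.IsChain Linked

def firstTimes (S : Set (V × V × ℝ)) (v u : V) : Set EReal :=
  {x | ∃ P e, IsPathIn S u v P ∧ P.head? = some e ∧ x = (e.2.2 : EReal)}

lemma pairwise_time_lt_of_isChain {P : List (V × V × ℝ)} (h : P.IsChain Linked) :
    P.Pairwise (fun e f => e.2.2 < f.2.2) := by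
  have : (P.map (·.2.2)).IsChain (· < ·) :=
    List.isChain_map _ |>.mpr (h.imp fun _ _ => And.right)
  exact List.pairwise_map.mp (List.isChain_iff_pairwise.mp this)

lemma time_le_of_getLast? {P : List (V × V × ℝ)} (h : P.IsChain Linked) {f g : V × V × ℝ}
    (hf : f ∈ P) (hg : P.getLast? = some g) : f.2.2 ≤ g.2.2 := by
  obtain ⟨Q, rfl⟩ := List.getLast?_eq_some_iff.mp hg
  rcases List.mem_append.mp hf with hfQ | hfg
  · exact (List.pairwise_append.mp (pairwise_time_lt_of_isChain h)).2.2 f hfQ g (by simp) |>.le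
  · rw [List.mem_singleton.mp hfg]

lemma IsPathIn.mono {S T : Set (V × V × ℝ)} (hST : S ⊆ T) {u v : V}
    {P : List (V × V × ℝ)} (h : IsPathIn S u v P) : IsPathIn T u v P :=
  ⟨h.1, fun e he => hST (h.2.1 e he), h.2.2⟩

lemma IsPathIn.head?_append_singleton {S : Set (V × V × ℝ)} {u v : V}
    {Q : List (V × V × ℝ)} (h : IsPathIn S u v Q) (e : V × V × ℝ) : (Q ++ [e]).head? = Q.head? :=
  List.head?_append_of_ne_nil _ h.1

lemma firstTimes_empty (v u : V) : firstTimes ∅ v u = ∅ :=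
  Set.eq_empty_of_forall_notMem fun _ ⟨_, e, hP, he, _⟩ => hP.2.1 e (List.mem_of_head? he)

lemma sSup_firstTimes_le {S : Set (V × V × ℝ)} {s : ℝ} (h : ∀ f ∈ S, f.2.2 ≤ s) (v u : V) :
    sSup (firstTimes S v u) ≤ s :=
  sSup_le fun _ ⟨_, e, hP, he, hx⟩ =>
    hx ▸ EReal.coe_le_coe_iff.mpr (h e (hP.2.1 e (List.mem_of_head? he)))

section Insert

variable {S : Set (V × V × ℝ)} {e₀ : V × V × ℝ}

lemma eq_append_of_isChain_of_subset_insert (hlt : ∀ f ∈ S, f.2.2 < e₀.2.2)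
    {P : List (V × V × ℝ)} (hP : P.IsChain Linked) (hPS : ∀ f ∈ P, f ∈ insert e₀ S) :
    (∀ f ∈ P, f ∈ S) ∨ ∃ Q, P = Q ++ [e₀] ∧ ∀ f ∈ Q, f ∈ S := by
  by_cases he₀ : e₀ ∈ P
  · obtain ⟨A, B, rfl⟩ := List.append_of_mem he₀
    have hsorted := List.pairwise_append.mp (pairwise_time_lt_of_isChain hP)
    have hB : B = [] := by
      refine List.eq_nil_iff_forall_not_mem.mpr fun b hb => ?_
      have hb_lt : e₀.2.2 < b.2.2 := List.rel_of_pairwise_cons hsorted.2.1 hb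
      rcases hPS b (by simp [hb]) with rfl | hbS
      · exact lt_irrefl _ hb_lt
      · exact lt_asymm hb_lt (hlt b hbS)
    subst hB
    refine Or.inr ⟨A, rfl, fun a ha => ?_⟩
    have ha_lt : a.2.2 < e₀.2.2 := hsorted.2.2 a ha e₀ (by simp)
    exact (hPS a (by simp [ha])).resolve_left (by rintro rfl; exact lt_irrefl _ ha_lt)
  · exact Or.inl fun f hf => (hPS f hf).resolve_left (by rintro rfl; exact he₀ hf)

lemma isPathIn_insert_singleton (S : Set (V × V × ℝ)) (e₀ : V × V × ℝ) :
    IsPathIn (insert e₀ S) e₀.1 e₀.2.1 [e₀] :=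
  ⟨List.cons_ne_nil _ _, by simp, ⟨e₀, rfl, rfl⟩, ⟨e₀, rfl, rfl⟩, List.isChain_singleton _⟩

lemma IsPathIn.append_singleton (hlt : ∀ f ∈ S, f.2.2 < e₀.2.2) {u : V}
    {Q : List (V × V × ℝ)} (hQ : IsPathIn S u e₀.1 Q) :
    IsPathIn (insert e₀ S) u e₀.2.1 (Q ++ [e₀]) := by
  obtain ⟨hne, hQS, ⟨e, he, rfl⟩, ⟨q, hq, hqe₀⟩, hchain⟩ := hQ
  refine ⟨by simp, fun f hf => ?_, ⟨e, (List.head?_append_of_ne_nil _ hne).trans he, rfl⟩,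
    ⟨e₀, by simp, rfl⟩, hchain.append (List.isChain_singleton _) fun x hx y hy => ?_⟩
  · rcases List.mem_append.mp hf with hf | hf
    · exact Or.inr (hQS f hf)
    · exact Or.inl (List.mem_singleton.mp hf)
  · obtain rfl : x = q := Option.some_injective _ (hx.symm.trans hq)
    obtain rfl : y = e₀ := by simpa using hy.symm
    exact ⟨hqe₀, hlt x (hQS x (List.mem_of_getLast? hq))⟩

lemma IsPathIn.of_insert (hlt : ∀ f ∈ S, f.2.2 < e₀.2.2) {u v : V}
    {P : List (V × V × ℝ)} (hP : IsPathIn (insert e₀ S) u v P) :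
    IsPathIn S u v P ∨ v = e₀.2.1 ∧
      (P = [e₀] ∧ u = e₀.1 ∨ ∃ Q, P = Q ++ [e₀] ∧ IsPathIn S u e₀.1 Q) := by
  obtain ⟨hne, hPS, ⟨e, he, heu⟩, ⟨g, hg, hgv⟩, hchain⟩ := hP
  rcases eq_append_of_isChain_of_subset_insert hlt hchain hPS with hS | ⟨Q, rfl, hQS⟩
  · exact Or.inl ⟨hne, hS, ⟨e, he, heu⟩, ⟨g, hg, hgv⟩, hchain⟩
  obtain rfl : e₀ = g := by simpa using hg
  refine Or.inr ⟨hgv.symm, ?_⟩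
  rcases eq_or_ne Q [] with rfl | hQne
  · obtain rfl : e₀ = e := by simpa using he
    exact Or.inl ⟨rfl, heu.symm⟩
  obtain ⟨hQchain, -, hlink⟩ := List.isChain_append.mp hchain
  obtain ⟨q, hq⟩ := Option.ne_none_iff_exists'.mp (mt List.getLast?_eq_none_iff.mp hQne)
  refine Or.inr ⟨Q, rfl, hQne, hQS, ⟨e, ?_, heu⟩, ⟨q, hq, (hlink q hq e₀ rfl).1⟩,
    hQchain⟩
  rwa [List.head?_append_of_ne_nil _ hQne] at he

lemma firstTimes_insert_of_ne (hlt : ∀ f ∈ S, f.2.2 < e₀.2.2) {v : V} (hv : v ≠ e₀.2.1)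
    (u : V) : firstTimes (insert e₀ S) v u = firstTimes S v u := by
  ext x
  constructor
  · rintro ⟨P, e, hP, he, rfl⟩
    rcases hP.of_insert hlt with hP | ⟨rfl, -⟩
    · exact ⟨P, e, hP, he, rfl⟩
    · exact absurd rfl hv
  · rintro ⟨P, e, hP, he, rfl⟩
    exact ⟨P, e, hP.mono (Set.subset_insert _ _), he, rfl⟩

lemma firstTimes_insert_receiver (hlt : ∀ f ∈ S, f.2.2 < e₀.2.2) (u : V) :
    firstTimes (insert e₀ S) e₀.2.1 u =
      firstTimes S e₀.2.1 u ∪ firstTimes S e₀.1 u ∪ {x | u = e₀.1 ∧ x = e₀.2.2} := by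
  ext x
  constructor
  · rintro ⟨P, e, hP, he, rfl⟩
    rcases hP.of_insert hlt with hP | ⟨-, ⟨rfl, rfl⟩ | ⟨Q, rfl, hQ⟩⟩
    · exact Or.inl (Or.inl ⟨P, e, hP, he, rfl⟩)
    · obtain rfl : e₀ = e := by simpa using he
      exact Or.inr ⟨rfl, rfl⟩
    · exact Or.inl (Or.inr ⟨Q, e, hQ, (hQ.head?_append_singleton e₀).symm.trans he, rfl⟩)
  · rintro ((⟨P, e, hP, he, rfl⟩ | ⟨Q, e, hQ, he, rfl⟩) | ⟨rfl, rfl⟩)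
    · exact ⟨P, e, hP.mono (Set.subset_insert _ _), he, rfl⟩
    · exact ⟨Q ++ [e₀], e, hQ.append_singleton hlt,
        (hQ.head?_append_singleton e₀).trans he, rfl⟩
    · exact ⟨[e₀], e₀, isPathIn_insert_singleton S e₀, rfl, rfl⟩

lemma clockStep_eq_sSup_firstTimes_insert [DecidableEq V] {st : V → V → EReal}
    (hst : ∀ v u, u ≠ v → st v u = sSup (firstTimes S v u)) (hlt : ∀ f ∈ S, f.2.2 < e₀.2.2)
    {v u : V} (huv : u ≠ v) : clockStep st e₀ v u = sSup (firstTimes (insert e₀ S) v u) := by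
  unfold clockStep
  rcases eq_or_ne v e₀.2.1 with rfl | hv
  · rw [if_pos rfl, firstTimes_insert_receiver hlt, sSup_union, sSup_union, hst _ _ huv]
    rcases eq_or_ne u e₀.1 with rfl | hu
    · have hcycle := sSup_firstTimes_le (fun f hf => (hlt f hf).le) e₀.1 e₀.1
      have hsingleton : {x : EReal | e₀.1 = e₀.1 ∧ x = e₀.2.2} = {(e₀.2.2 : EReal)} := by simp
      rw [if_pos rfl, hsingleton, sSup_singleton, max_assoc, max_eq_right hcycle]
    · have hempty : {x : EReal | u = e₀.1 ∧ x = e₀.2.2} = ∅ := by simp [hu]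
      rw [if_neg hu, if_neg huv, hst _ _ hu, hempty, sSup_empty, max_bot_right]
  · rw [if_neg hv, firstTimes_insert_of_ne hlt hv, hst _ _ huv]

end Insert

theorem foldl_clockStep_eq_sSup_firstTimes [DecidableEq V] {L : List (V × V × ℝ)}
    (hL : L.Pairwise (fun e f => e.2.2 < f.2.2)) {v u : V} (huv : u ≠ v) :
    (L.foldl clockStep fun _ _ => (⊥ : EReal)) v u = sSup (firstTimes {e | e ∈ L} v u) := by
  induction L using List.reverseRecOn generalizing v u with
  | nil =>
    have hnil : {e | e ∈ ([] : List (V × V × ℝ))} = ∅ :=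
      Set.eq_empty_of_forall_notMem fun _ => List.not_mem_nil
    rw [hnil, firstTimes_empty, sSup_empty]
    rfl
  | append_singleton M e₀ ih =>
    obtain ⟨hM, -, hlt⟩ := List.pairwise_append.mp hL
    have hinsert : {e | e ∈ M ++ [e₀]} = insert e₀ {e | e ∈ M} := by ext; simp [or_comm]
    rw [List.foldl_append, List.foldl_cons, List.foldl_nil, hinsert]
    exact clockStep_eq_sSup_firstTimes_insert (fun _ _ => ih hM)
      (fun f hf => hlt f hf e₀ (List.mem_singleton_self e₀)) huv

lemma isTRPath_iff_isPathIn (Evs : Finset (V × V × ℝ)) (u v : V) (t : ℝ)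
    (P : List (V × V × ℝ)) :
    IsTRPath Evs u v t P ↔ IsPathIn {e | e ∈ Evs ∧ e.2.2 ≤ t} u v P := by
  constructor
  · rintro ⟨hne, hPE, hhead, ⟨g, hg, hgv, hgt⟩, hchain⟩
    exact ⟨hne, fun f hf => ⟨hPE f hf, (time_le_of_getLast? hchain hf hg).trans hgt⟩, hhead,
      ⟨g, hg, hgv⟩, hchain⟩
  · rintro ⟨hne, hPS, hhead, ⟨g, hg, hgv⟩, hchain⟩
    exact ⟨hne, fun f hf => (hPS f hf).1, hhead,
      ⟨g, hg, hgv, (hPS g (List.mem_of_getLast? hg)).2⟩, hchain⟩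

lemma view_eq_sSup_firstTimes [DecidableEq V] (Evs : Finset (V × V × ℝ)) {v u : V}
    (huv : u ≠ v) (t : ℝ) : view Evs v t u = sSup (firstTimes {e | e ∈ Evs ∧ e.2.2 ≤ t} v u) := by
  simp only [view, if_neg huv, firstTimes, isTRPath_iff_isPathIn]

end VectorClock

theorem vector_clock_correct_general {V : Type*} [DecidableEq V]
    (Evs : Finset (V × V × ℝ))
    (t : ℝ) (L : List (V × V × ℝ))
    (hsorted : L.Pairwise (fun e f => e.2.2 < f.2.2))
    (hmem : ∀ e, e ∈ L ↔ e ∈ Evs ∧ e.2.2 ≤ t) :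
    ∀ v u : V, u ≠ v → (L.foldl clockStep fun _ _ => (⊥ : EReal)) v u = view Evs v t u := by
  intro v u huv
  have hL : {e | e ∈ L} = {e | e ∈ Evs ∧ e.2.2 ≤ t} := Set.ext hmem
  rw [VectorClock.foldl_clockStep_eq_sSup_firstTimes hsorted huv,
    VectorClock.view_eq_sSup_firstTimes Evs huv t, hL]

/-- Correctness of the vector-clock algorithm: process the events in increasing order of
time, starting from the all-`⊥` initialization.  Then for every time `t`, after processing
exactly the events with time `≤ t` (the sorted list `L`), the stored clock value `Cl_v(u)`
equals the view `φ_{v,t}(u)` for all nodes `u ≠ v`, i.e. the maximum first-event time over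
all time-respecting paths from `u` to `v` ending by time `t` (and `⊥` if no such path
exists). -/
theorem vector_clock_correct {V : Type*} [Fintype V] [DecidableEq V]
    (Evs : Finset (V × V × ℝ))
    (hself : ∀ e ∈ Evs, e.1 ≠ e.2.1)
    (htimes : ∀ e ∈ Evs, ∀ f ∈ Evs, e.2.2 = f.2.2 → e = f)
    (t : ℝ) (L : List (V × V × ℝ))
    (hsorted : L.Pairwise (fun e f => e.2.2 < f.2.2))
    (hmem : ∀ e, e ∈ L ↔ e ∈ Evs ∧ e.2.2 ≤ t) :
    ∀ v u : V, u ≠ v → (L.foldl clockStep fun _ _ => (⊥ : EReal)) v u = view Evs v t u :=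
  vector_clock_correct_general Evs t L hsorted hmem
end

section
/- Suppose φ_{v,t}(w) ≠ ⊥ and let s = φ_{v,t}(w). Then for every node u, φ_{v,t}(u) ≥ φ_{w,s}(u); that is, v's view at time t of any node u is at least as recent as the view of u that w held at the time s at which v's current information about w originated. -/
section

variable {V : Type*} {Evs : Finset (V × V × ℝ)} {u v w : V} {t s : ℝ}
  {L P Q : List (V × V × ℝ)} {e : V × V × ℝ}

def originTimes (Evs : Finset (V × V × ℝ)) (u v : V) (t : ℝ) : Set EReal :=
  {x : EReal | ∃ L e, IsTRPath Evs u v t L ∧ L.head? = some e ∧ x = (e.2.2 : EReal)}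

theorem view_of_ne [DecidableEq V] (h : u ≠ v) : view Evs v t u = sSup (originTimes Evs u v t) :=
  if_neg h

theorem originTimes_finite : (originTimes Evs u v t).Finite :=
  (Evs.finite_toSet.image fun e => (e.2.2 : EReal)).subset <| by
    rintro _ ⟨L, e, hL, he, rfl⟩
    exact ⟨e, hL.2.1 e (List.mem_of_mem_head? he), rfl⟩

namespace IsTRPath

theorem mem (hL : IsTRPath Evs u v t L) (he : e ∈ L) : e ∈ Evs :=
  hL.2.1 e he

theorem head_fst (hL : IsTRPath Evs u v t L) (he : L.head? = some e) : e.1 = u := by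
  obtain ⟨f, hf, rfl⟩ := hL.2.2.1
  rw [Option.some.inj (he.symm.trans hf)]

theorem getLast_snd (hL : IsTRPath Evs u v t L) (he : L.getLast? = some e) :
    e.2.1 = v ∧ e.2.2 ≤ t := by
  obtain ⟨f, hf, rfl, hft⟩ := hL.2.2.2.1
  rw [Option.some.inj (he.symm.trans hf)]
  exact ⟨rfl, hft⟩

theorem head_time_le (hL : IsTRPath Evs u v t L) (he : L.head? = some e) : e.2.2 ≤ t := by
  obtain ⟨hne, -, -, ⟨f, hf, -, hft⟩, hchain⟩ := hL
  have hef := List.relationReflTransGen_of_exists_isChain L hchain hne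
  rw [(List.head_eq_iff_head?_eq_some hne).2 he,
    (List.getLast_eq_iff_getLast?_eq_some hne).2 hf] at hef
  have : Relation.ReflTransGen (· ≤ ·) e.2.2 f.2.2 :=
    Relation.ReflTransGen.lift (·.2.2) (fun _ _ h => h.2.le) _ _ hef
  rw [Relation.reflTransGen_eq_self] at this
  exact this.trans hft

theorem append (hQ : IsTRPath Evs u w s Q) (hP : IsTRPath Evs w v t P)
    (hlt : ∀ g ∈ Q.getLast?, ∀ e ∈ P.head?, g.2.2 < e.2.2) :
    IsTRPath Evs u v t (Q ++ P) := by
  obtain ⟨f, hf, hfu⟩ := hQ.2.2.1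
  obtain ⟨g, hg, hgv, hgt⟩ := hP.2.2.2.1
  refine ⟨by simp [hQ.1], ?_, ⟨f, ?_, hfu⟩, ⟨g, ?_, hgv, hgt⟩, ?_⟩
  · simp only [List.mem_append]
    rintro e (he | he)
    exacts [hQ.mem he, hP.mem he]
  · rw [List.head?_append, hf]; rfl
  · rw [List.getLast?_append, hg]; rfl
  · refine hQ.2.2.2.2.append hP.2.2.2.2 fun x hx y hy => ⟨?_, hlt x hx y hy⟩
    rw [(hQ.getLast_snd hx).1, hP.head_fst hy]

end IsTRPath

theorem time_lt_of_snd_eq_fst (hself : ∀ e ∈ Evs, e.1 ≠ e.2.1)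
    (htimes : ∀ e ∈ Evs, ∀ f ∈ Evs, e.2.2 = f.2.2 → e = f) {f : V × V × ℝ}
    (he : e ∈ Evs) (hf : f ∈ Evs) (hef : e.2.1 = f.1) (hle : e.2.2 ≤ f.2.2) :
    e.2.2 < f.2.2 := by
  refine hle.lt_of_ne fun heq => hself f hf ?_
  rw [← hef, htimes e he f hf heq]

variable [DecidableEq V]

theorem le_view_of_isTRPath (hL : IsTRPath Evs u v t L) (he : L.head? = some e) :
    (e.2.2 : EReal) ≤ view Evs v t u := by
  by_cases huv : u = v
  · rw [view, if_pos huv]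
    exact_mod_cast hL.head_time_le he
  · rw [view_of_ne huv]
    exact le_sSup ⟨L, e, hL, he, rfl⟩

theorem exists_isTRPath_of_view_eq (huv : u ≠ v) (h : view Evs v t u = s) :
    ∃ L e, IsTRPath Evs u v t L ∧ L.head? = some e ∧ e.2.2 = s := by
  rw [view_of_ne huv] at h
  have hne : (originTimes Evs u v t).Nonempty := by
    by_contra hempty
    rw [Set.not_nonempty_iff_eq_empty.1 hempty, sSup_empty] at h
    exact EReal.bot_ne_coe s h
  obtain ⟨L, e, hL, he, hes⟩ := h ▸ hne.csSup_mem originTimes_finite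
  exact ⟨L, e, hL, he, by exact_mod_cast hes.symm⟩

end

theorem view_ge_view_at_origin_general {V : Type*} [DecidableEq V]
    (Evs : Finset (V × V × ℝ))
    (hself : ∀ e ∈ Evs, e.1 ≠ e.2.1)
    (htimes : ∀ e ∈ Evs, ∀ f ∈ Evs, e.2.2 = f.2.2 → e = f)
    (v w : V) (t s : ℝ) (hs : view Evs v t w = (s : EReal)) :
    ∀ u : V, view Evs w s u ≤ view Evs v t u := by
  intro u
  by_cases hwv : w = v
  · subst hwv
    obtain rfl : t = s := by simpa [view] using hs
    exact le_rfl
  obtain ⟨P, e₀, hP, hPe₀, he₀s⟩ := exists_isTRPath_of_view_eq hwv hs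
  by_cases huw : u = w
  · subst huw
    rw [hs, view, if_pos rfl]
  rw [view_of_ne huw]
  refine sSup_le ?_
  rintro _ ⟨Q, f, hQ, hQf, rfl⟩
  refine le_view_of_isTRPath (hQ.append hP ?_) (by rw [List.head?_append, hQf]; rfl)
  intro g hg e he
  obtain rfl : e = e₀ := Option.some.inj (he.symm.trans hPe₀)
  obtain ⟨hgw, hgs⟩ := hQ.getLast_snd hg
  exact time_lt_of_snd_eq_fst hself htimes (hQ.mem (List.mem_of_mem_getLast? hg))
    (hP.mem (List.mem_of_mem_head? he)) (hgw.trans (hP.head_fst he).symm) (he₀s ▸ hgs)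

/-- Suppose `φ_{v,t}(w) ≠ ⊥`, say `φ_{v,t}(w) = s` with `s` a real number.  Then for every
node `u`, `φ_{w,s}(u) ≤ φ_{v,t}(u)`: the view of `u` held by `v` at time `t` is at least as
recent as the view of `u` that `w` held at the time `s` at which `v`'s current information
about `w` originated. -/
theorem view_ge_view_at_origin {V : Type*} [Fintype V] [DecidableEq V]
    (Evs : Finset (V × V × ℝ))
    (hself : ∀ e ∈ Evs, e.1 ≠ e.2.1)
    (htimes : ∀ e ∈ Evs, ∀ f ∈ Evs, e.2.2 = f.2.2 → e = f)
    (v w : V) (t s : ℝ) (hs : view Evs v t w = (s : EReal)) :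
    ∀ u : V, view Evs w s u ≤ view Evs v t u :=
  view_ge_view_at_origin_general Evs hself htimes v w t s hs
end
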